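/- Let i, j ∈ M(α₁,α₂) be cyclically irreducible of length N and λ, μ ∈ ℂ. Then P^i(u-λ) = P^j(u-μ) (as pairs of polynomials) if and only if there exists k ∈ {0,…,N-1} such that j = k·i and μ = λ + α_{i₁} + ⋯ + α_{i_k}. -/

import Mathlib

/-!
Shifted by `λ`, the polynomial `P_m^i` has as roots the points `λ + α_{i₁} + ⋯ + α_{i_r}` of the
walk spelled by `i`, namely those reached by a letter `i_r ≠ m`. So the pair `P^i(u - λ)` records
exactly the multiset of labelled vertices of this walk, which is closed since `i` has zero
`α`-sum. A cyclic shift of `i`, started at the matching vertex, traverses the same closed walk.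
Conversely, cyclic irreducibility makes the vertices of the walk of `i` pairwise distinct, and a
vertex determines its predecessor (subtract the weight of its label); hence any walk through the
same labelled points follows the walk of `i` from wherever it starts.
-/

open Polynomial

def wsum (α₁ α₂ : ℂ) (l : List Bool) : ℂ :=
  (l.map (fun b => if b then α₂ else α₁)).sum

noncomputable def Pfun (α₁ α₂ : ℂ) (mb : Bool) (l : List Bool) : Polynomial ℂ :=
  ∏ k ∈ Finset.range l.length,
    if l.getD k false = mb then 1
    else (Polynomial.X - Polynomial.C (wsum α₁ α₂ (l.take (k + 1))))

def CycRed (α₁ α₂ : ℂ) (l : List Bool) : Prop :=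
  ∃ (k : ℕ) (a b : List Bool), a ≠ [] ∧ b ≠ [] ∧
    wsum α₁ α₂ a = 0 ∧ wsum α₁ α₂ b = 0 ∧ l.rotate k = a ++ b

section WeightedPath

variable {G β : Type*} [Add G] (w : β → G) {n : ℕ}

def IsWeightedPath (v : Fin (n + 1) → G × β) : Prop :=
  ∀ i : Fin n, (v i.succ).1 = (v i.castSucc).1 + w (v i.succ).2

def IsWeightedCycle (v : Fin (n + 1) → G × β) : Prop :=
  ∀ s, (v (s + 1)).1 = (v s).1 + w (v (s + 1)).2

variable {w} {u v : Fin (n + 1) → G × β}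

theorem IsWeightedCycle.isWeightedPath (hv : IsWeightedCycle w v) : IsWeightedPath w v :=
  fun i => by simpa only [Fin.coeSucc_eq_succ] using hv i.castSucc

theorem IsWeightedPath.isWeightedCycle (hv : IsWeightedPath w v)
    (hlast : (v 0).1 = (v (Fin.last n)).1 + w (v 0).2) : IsWeightedCycle w v := by
  intro s
  induction s using Fin.lastCases with
  | last => simpa only [Fin.last_add_one] using hlast
  | cast i => simpa only [Fin.coeSucc_eq_succ] using hv i

theorem IsWeightedCycle.comp_add_right (hv : IsWeightedCycle w v) (k : Fin (n + 1)) :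
    IsWeightedCycle w fun s => v (s + k) :=
  fun s => by simpa only [add_right_comm s 1 k] using hv (s + k)

theorem IsWeightedPath.ext (hu : IsWeightedPath w u) (hv : IsWeightedPath w v)
    (hlabel : ∀ s, (u s).2 = (v s).2) (h₀ : (u 0).1 = (v 0).1) : u = v := by
  funext s
  induction s using Fin.induction with
  | zero => exact Prod.ext h₀ (hlabel 0)
  | succ i ih => exact Prod.ext (by rw [hu i, hv i, ih, hlabel]) (hlabel _)

/-- Each point `p` of the cycle determines the position `p.1 - w p.2` of its predecessor. -/
theorem IsWeightedCycle.exists_eq_add_right [IsRightCancelAdd G] (hv : IsWeightedCycle w v)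
    (hu : IsWeightedPath w u) (hinj : Function.Injective fun s => (v s).1)
    (hmem : ∀ r, ∃ s, u r = v s) : ∃ k, ∀ s, u s = v (s + k) := by
  obtain ⟨k, hk⟩ := hmem 0
  refine ⟨k, fun s => ?_⟩
  induction s using Fin.induction with
  | zero => rwa [zero_add]
  | succ i ih =>
    obtain ⟨j, hj⟩ := hmem i.succ
    have hpred : (v (j - 1)).1 = (v (i.castSucc + k)).1 := by
      have hstep := hv (j - 1)
      rw [sub_add_cancel] at hstep
      apply add_right_cancel (b := w (u i.succ).2)
      rw [← ih, ← hu i, hj]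
      exact hstep.symm
    rw [hj, ← Fin.coeSucc_eq_succ, add_right_comm, ← hinj hpred, sub_add_cancel]

end WeightedPath

section LabelFactor

variable {K β : Type*} [Field K] [DecidableEq β]

noncomputable def labelFactor (m : β) (p : K × β) : K[X] :=
  if p.2 = m then 1 else X - C p.1

theorem isRoot_prod_labelFactor_iff {ι : Type*} [Fintype ι] (v : ι → K × β) (m : β) (x : K) :
    (∏ i, labelFactor m (v i)).IsRoot x ↔ ∃ i, (v i).2 ≠ m ∧ (v i).1 = x := by
  simp only [IsRoot.def, eval_prod, Finset.prod_eq_zero_iff, Finset.mem_univ, true_and,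
    labelFactor]
  refine exists_congr fun i => ?_
  split_ifs with h <;> simp [h, sub_eq_zero, eq_comm]

theorem exists_eq_of_prod_labelFactor_eq {ι κ : Type*} [Fintype ι] [Fintype κ]
    {v : ι → K × Bool} {u : κ → K × Bool}
    (h : ∀ m, ∏ i, labelFactor m (v i) = ∏ j, labelFactor m (u j)) (j : κ) :
    ∃ i, u j = v i := by
  have hroot : (∏ i, labelFactor (!(u j).2) (v i)).IsRoot (u j).1 := by
    rw [h, isRoot_prod_labelFactor_iff]
    exact ⟨j, by simp, rfl⟩
  obtain ⟨i, hlabel, hpos⟩ := (isRoot_prod_labelFactor_iff _ _ _).1 hroot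
  exact ⟨i, Prod.ext hpos.symm (by simpa [eq_comm] using hlabel)⟩

end LabelFactor

def weight (α₁ α₂ : ℂ) (b : Bool) : ℂ := if b then α₂ else α₁

variable {α₁ α₂ : ℂ}

theorem wsum_append (a b : List Bool) :
    wsum α₁ α₂ (a ++ b) = wsum α₁ α₂ a + wsum α₁ α₂ b := by
  simp [wsum]

theorem wsum_rotate (l : List Bool) (k : ℕ) : wsum α₁ α₂ (l.rotate k) = wsum α₁ α₂ l :=
  ((l.rotate_perm k).map _).sum_eq

theorem wsum_take_succ {l : List Bool} {k : ℕ} (hk : k < l.length) :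
    wsum α₁ α₂ (l.take (k + 1)) = wsum α₁ α₂ (l.take k) + weight α₁ α₂ (l.getD k false) := by
  rw [List.take_add_one, wsum_append, List.getElem?_eq_getElem hk, List.getD_eq_getElem _ _ hk]
  simp [wsum, weight]

/-- Cutting `l.rotate (a + 1)` after the letters `a + 1, …, b` of `l` splits it into two
zero-sum words. -/
theorem cycRed_of_wsum_take_eq {l : List Bool} (hl : wsum α₁ α₂ l = 0) {a b : ℕ} (hab : a < b)
    (hb : b < l.length) (h : wsum α₁ α₂ (l.take (a + 1)) = wsum α₁ α₂ (l.take (b + 1))) :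
    CycRed α₁ α₂ l := by
  set A := (l.drop (a + 1)).take (b - a)
  set B := (l.drop (a + 1)).drop (b - a) ++ l.take (a + 1)
  have hrot : l.rotate (a + 1) = A ++ B := by
    rw [List.rotate_eq_drop_append_take (by omega), ← List.append_assoc, List.take_append_drop]
  have hA : wsum α₁ α₂ A = 0 := by
    have : l.take (b + 1) = l.take (a + 1) ++ A := by
      rw [← List.take_add]; congr 1; omega
    rw [this, wsum_append] at h
    exact add_eq_left.1 h.symm
  refine ⟨a + 1, A, B, ?_, ?_, hA, ?_, hrot⟩
  · rw [← List.length_pos_iff, List.length_take, List.length_drop]; omega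
  · simp [B, List.ne_nil_of_length_pos (by omega : 0 < l.length)]
  · have := wsum_rotate (α₁ := α₁) (α₂ := α₂) l (a + 1)
    rwa [hrot, wsum_append, hA, hl, zero_add] at this

/-- The point `c + α_{i₁} + ⋯ + α_{i_{s+1}}` of the walk of `l = (i₁, …, i_N)` from `c`,
labelled by the letter `i_{s+1} = l[s]` that reaches it. -/
def vertex (α₁ α₂ c : ℂ) (l : List Bool) (s : ℕ) : ℂ × Bool :=
  (c + wsum α₁ α₂ (l.take (s + 1)), l.getD s false)

variable {c : ℂ} {l : List Bool} {n : ℕ}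

theorem vertex_zero_fst (hl : 0 < l.length) :
    (vertex α₁ α₂ c l 0).1 = c + weight α₁ α₂ (l.getD 0 false) := by
  rw [vertex, wsum_take_succ hl, List.take_zero]
  simp [wsum]

theorem Pfun_comp_X_sub_C (hn : l.length = n + 1) (m : Bool) :
    (Pfun α₁ α₂ m l).comp (X - C c) = ∏ s : Fin (n + 1), labelFactor m (vertex α₁ α₂ c l s) := by
  rw [Pfun, prod_comp, hn, Finset.prod_range]
  refine Finset.prod_congr rfl fun s _ => ?_
  unfold labelFactor vertex
  split_ifs
  · exact one_comp
  · simp only [sub_comp, X_comp, C_comp, map_add]; ring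

theorem isWeightedPath_vertex (hn : l.length = n + 1) :
    IsWeightedPath (weight α₁ α₂) fun s : Fin (n + 1) => vertex α₁ α₂ c l s := by
  intro i
  simp only [vertex, Fin.val_succ, Fin.val_castSucc]
  rw [wsum_take_succ (by omega), add_assoc]

theorem isWeightedCycle_vertex (hn : l.length = n + 1) (hl : wsum α₁ α₂ l = 0) :
    IsWeightedCycle (weight α₁ α₂) fun s : Fin (n + 1) => vertex α₁ α₂ c l s := by
  refine (isWeightedPath_vertex hn).isWeightedCycle ?_
  rw [Fin.val_zero, vertex_zero_fst (by omega)]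
  simp only [vertex, Fin.val_last, ← hn, List.take_length, hl, add_zero]

theorem vertex_fst_injective (hn : l.length = n + 1) (hl : wsum α₁ α₂ l = 0)
    (hi : ¬ CycRed α₁ α₂ l) :
    Function.Injective fun s : Fin (n + 1) => (vertex α₁ α₂ c l s).1 := by
  intro s t hst
  simp only [vertex, add_right_inj] at hst
  rcases lt_trichotomy s t with h | h | h
  · exact (hi (cycRed_of_wsum_take_eq hl h (t.isLt.trans_eq hn.symm) hst)).elim
  · exact h
  · exact (hi (cycRed_of_wsum_take_eq hl h (s.isLt.trans_eq hn.symm) hst.symm)).elim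

theorem vertex_rotate (hn : l.length = n + 1) (hl : wsum α₁ α₂ l = 0) (k : Fin (n + 1))
    (s : Fin (n + 1)) :
    vertex α₁ α₂ (c + wsum α₁ α₂ (l.take k)) (l.rotate k) s = vertex α₁ α₂ c l ↑(s + k) := by
  have hlabel (s : Fin (n + 1)) : (l.rotate k).getD s false = l.getD ↑(s + k) false := by
    have hs : (s : ℕ) < (l.rotate k).length := by rw [List.length_rotate, hn]; exact s.isLt
    rw [List.getD_eq_getElem _ _ hs, List.getElem_rotate,
      List.getD_eq_getElem _ _ ((s + k).isLt.trans_eq hn.symm)]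
    simp [Fin.val_add, hn]
  refine congrFun (IsWeightedPath.ext (w := weight α₁ α₂) (isWeightedPath_vertex (by simp [hn]))
    ((isWeightedCycle_vertex hn hl).comp_add_right k).isWeightedPath hlabel ?_) s
  have h₀ := hlabel 0
  rw [Fin.val_zero, zero_add] at h₀
  rw [Fin.val_zero, vertex_zero_fst (by simp [hn]), zero_add, h₀, vertex,
    wsum_take_succ (k.isLt.trans_eq hn.symm), add_assoc]

theorem eq_of_vertex_eq {c' : ℂ} {l' : List Bool} (hn : l.length = n + 1)
    (hn' : l'.length = n + 1)
    (h : ∀ s : Fin (n + 1), vertex α₁ α₂ c l s = vertex α₁ α₂ c' l' s) : l = l' ∧ c = c' := by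
  have hl : l = l' := by
    refine List.ext_getElem (hn.trans hn'.symm) fun i hi hi' => ?_
    have : l.getD i false = l'.getD i false := congrArg Prod.snd (h ⟨i, hi.trans_eq hn⟩)
    rwa [List.getD_eq_getElem _ _ hi, List.getD_eq_getElem _ _ hi'] at this
  subst hl
  exact ⟨rfl, add_right_cancel (congrArg Prod.fst (h 0))⟩

theorem stmt16_general (α₁ α₂ : ℂ)
    (N : ℕ) (l l' : List Bool)
    (hl : l ≠ [])
    (hMl : wsum α₁ α₂ l = 0)
    (hi : ¬ CycRed α₁ α₂ l)
    (hN : l.length = N) (hN' : l'.length = N)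
    (lam mu : ℂ) :
    ((Pfun α₁ α₂ false l).comp (X - C lam) = (Pfun α₁ α₂ false l').comp (X - C mu) ∧
     (Pfun α₁ α₂ true l).comp (X - C lam) = (Pfun α₁ α₂ true l').comp (X - C mu)) ↔
    ∃ k : ℕ, k < N ∧ l' = l.rotate k ∧ mu = lam + wsum α₁ α₂ (l.take k) := by
  obtain ⟨n, rfl⟩ : ∃ n, N = n + 1 := ⟨N - 1, by have := List.length_pos_iff.2 hl; omega⟩
  simp only [Pfun_comp_X_sub_C hN, Pfun_comp_X_sub_C hN']
  constructor
  · rintro ⟨h₁, h₂⟩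
    obtain ⟨k, hk⟩ := (isWeightedCycle_vertex hN hMl).exists_eq_add_right
      (isWeightedPath_vertex hN') (vertex_fst_injective hN hMl hi)
      (exists_eq_of_prod_labelFactor_eq (Bool.forall_bool.2 ⟨h₁, h₂⟩))
    simp only [← vertex_rotate hN hMl] at hk
    obtain ⟨rfl, rfl⟩ := eq_of_vertex_eq hN' (by simp [hN]) hk
    exact ⟨k, k.isLt, rfl, rfl⟩
  · rintro ⟨k, hk, rfl, rfl⟩
    lift k to Fin (n + 1) using hk
    simp only [vertex_rotate hN hMl]
    constructor <;>
      exact (Equiv.prod_comp (Equiv.addRight k) fun s => labelFactor _ (vertex α₁ α₂ lam l s)).symm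

theorem stmt16 (α₁ α₂ : ℂ) (hα₁ : α₁ ≠ 0) (hα₂ : α₂ ≠ 0)
    (N : ℕ) (l l' : List Bool)
    (hl : l ≠ []) (hl' : l' ≠ [])
    (hMl : wsum α₁ α₂ l = 0) (hMl' : wsum α₁ α₂ l' = 0)
    (hi : ¬ CycRed α₁ α₂ l) (hi' : ¬ CycRed α₁ α₂ l')
    (hN : l.length = N) (hN' : l'.length = N)
    (lam mu : ℂ) :
    ((Pfun α₁ α₂ false l).comp (X - C lam) = (Pfun α₁ α₂ false l').comp (X - C mu) ∧
     (Pfun α₁ α₂ true l).comp (X - C lam) = (Pfun α₁ α₂ true l').comp (X - C mu)) ↔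
    ∃ k : ℕ, k < N ∧ l' = l.rotate k ∧ mu = lam + wsum α₁ α₂ (l.take k) :=
  stmt16_general α₁ α₂ N l l' hl hMl hi hN hN' lam mu
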